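/- arXiv:1502.04954 — 7 statements merged into one kernel-verified Lean document; each statement's English description precedes it below -/
import Mathlib

section
/- Let u : ℝ → ℝ be smooth and suppose smooth functions ℓ_m, ℓ_n, ℓ_{m+1}, ℓ_{n+1} : ℝ → ℝ satisfy the Lenard recursion ℓ_{j+1}' = ℓ_j''' + 4u·ℓ_j' + 2u'·ℓ_j for j = m and j = n. Define Ω_{n,m} = (ℓ_n·ℓ_m)'' - 3ℓ_n'·ℓ_m' + 4u·ℓ_n·ℓ_m. Then ℓ_m·ℓ_{n+1}' + ℓ_n·ℓ_{m+1}' = Ω_{n,m}'. -/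
open scoped ContDiff
private lemma cd_deriv {f : ℝ → ℝ} (h : ContDiff ℝ ∞ f) : ContDiff ℝ ∞ (deriv f) :=
  (contDiff_infty_iff_deriv.mp h).2

theorem lenard_master_identity
    (u lm ln lm1 ln1 : ℝ → ℝ)
    (hu : ContDiff ℝ (⊤ : ℕ∞) u) (hlm : ContDiff ℝ (⊤ : ℕ∞) lm) (hln : ContDiff ℝ (⊤ : ℕ∞) ln)
    (hlm1 : ContDiff ℝ (⊤ : ℕ∞) lm1) (hln1 : ContDiff ℝ (⊤ : ℕ∞) ln1)
    (hrecn : ∀ s, deriv ln1 s =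
      deriv (deriv (deriv ln)) s + 4 * u s * deriv ln s + 2 * deriv u s * ln s)
    (hrecm : ∀ s, deriv lm1 s =
      deriv (deriv (deriv lm)) s + 4 * u s * deriv lm s + 2 * deriv u s * lm s) :
    ∀ s, lm s * deriv ln1 s + ln s * deriv lm1 s =
      deriv (fun t => deriv (deriv (fun r => ln r * lm r)) t
        - 3 * deriv ln t * deriv lm t + 4 * u t * ln t * lm t) s := by
  have hu0 : ContDiff ℝ ∞ u := hu.of_le (by simp)
  have hm0 : ContDiff ℝ ∞ lm := hlm.of_le (by simp)
  have hn0 : ContDiff ℝ ∞ ln := hln.of_le (by simp)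
  have hu1 := cd_deriv hu0
  have hm1 := cd_deriv hm0
  have hn1 := cd_deriv hn0
  have hm2 := cd_deriv hm1
  have hn2 := cd_deriv hn1
  -- first: rewrite deriv (deriv (ln*lm))
  have e1 : deriv (fun r => ln r * lm r) = fun r => deriv ln r * lm r + ln r * deriv lm r := by
    funext r
    exact deriv_mul (hn0.differentiable (by norm_num) r) (hm0.differentiable (by norm_num) r)
  have e2 : deriv (deriv (fun r => ln r * lm r)) =
      fun r => deriv (deriv ln) r * lm r + 2 * (deriv ln r * deriv lm r)
        + ln r * deriv (deriv lm) r := by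
    rw [e1]
    funext r
    have h1 : HasDerivAt (fun r => deriv ln r * lm r + ln r * deriv lm r)
        (deriv (deriv ln) r * lm r + deriv ln r * deriv lm r
          + (deriv ln r * deriv lm r + ln r * deriv (deriv lm) r)) r :=
      (((hn1.differentiable (by norm_num) r).hasDerivAt.mul
        (hm0.differentiable (by norm_num) r).hasDerivAt).add
        ((hn0.differentiable (by norm_num) r).hasDerivAt.mul
        (hm1.differentiable (by norm_num) r).hasDerivAt))
    rw [h1.deriv]; ring
  intro s
  -- derivative of big function
  have hF : HasDerivAt (fun t => deriv (deriv (fun r => ln r * lm r)) t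
        - 3 * deriv ln t * deriv lm t + 4 * u t * ln t * lm t)
      ((deriv (deriv (deriv ln)) s * lm s + deriv (deriv ln) s * deriv lm s
        + 2 * (deriv (deriv ln) s * deriv lm s + deriv ln s * deriv (deriv lm) s)
        + (deriv ln s * deriv (deriv lm) s + ln s * deriv (deriv (deriv lm)) s))
       - ((3 * deriv (deriv ln) s) * deriv lm s + (3 * deriv ln s) * deriv (deriv lm) s)
       + (((4 * deriv u s) * ln s + (4 * u s) * deriv ln s) * lm s
          + (4 * u s * ln s) * deriv lm s)) s := by
    rw [e2]
    have hA : HasDerivAt (fun t => deriv (deriv ln) t * lm t + 2 * (deriv ln t * deriv lm t)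
          + ln t * deriv (deriv lm) t)
        (deriv (deriv (deriv ln)) s * lm s + deriv (deriv ln) s * deriv lm s
          + 2 * (deriv (deriv ln) s * deriv lm s + deriv ln s * deriv (deriv lm) s)
          + (deriv ln s * deriv (deriv lm) s + ln s * deriv (deriv (deriv lm)) s)) s := by
      exact (((hn2.differentiable (by norm_num) s).hasDerivAt.mul
          (hm0.differentiable (by norm_num) s).hasDerivAt).add
        (((hn1.differentiable (by norm_num) s).hasDerivAt.mul
          (hm1.differentiable (by norm_num) s).hasDerivAt).const_mul 2)).add
        ((hn0.differentiable (by norm_num) s).hasDerivAt.mul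
          (hm2.differentiable (by norm_num) s).hasDerivAt)
    have hB : HasDerivAt (fun t => 3 * deriv ln t * deriv lm t)
        ((3 * deriv (deriv ln) s) * deriv lm s + (3 * deriv ln s) * deriv (deriv lm) s) s :=
      ((hn1.differentiable (by norm_num) s).hasDerivAt.const_mul 3).mul
        (hm1.differentiable (by norm_num) s).hasDerivAt
    have hC : HasDerivAt (fun t => 4 * u t * ln t * lm t)
        (((4 * deriv u s) * ln s + (4 * u s) * deriv ln s) * lm s
          + (4 * u s * ln s) * deriv lm s) s :=
      (((hu0.differentiable (by norm_num) s).hasDerivAt.const_mul 4).mul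
        (hn0.differentiable (by norm_num) s).hasDerivAt).mul
        (hm0.differentiable (by norm_num) s).hasDerivAt
    exact (hA.sub hB).add hC
  rw [hF.deriv, hrecn s, hrecm s]
  ring
end

section
/- Let u : ℝ → ℝ be smooth and suppose smooth functions ℓ_{m}, ℓ_{m+1}, ℓ_{n-1}, ℓ_n satisfy the Lenard recursion ℓ_{j+1}' = ℓ_j''' + 4u·ℓ_j' + 2u'·ℓ_j for j = m and j = n-1. With Ω_{a,b} := (ℓ_a·ℓ_b)'' - 3ℓ_a'·ℓ_b' + 4u·ℓ_a·ℓ_b, one has ℓ_m·ℓ_n' = ℓ_{m+1}·ℓ_{n-1}' + (Ω_{n-1,m} - ℓ_{n-1}·ℓ_{m+1})'. -/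
private lemma smooth_deriv' {f : ℝ → ℝ} (hf : ContDiff ℝ (⊤ : ℕ∞) f) :
    ContDiff ℝ (⊤ : ℕ∞) (deriv f) :=
  (contDiff_succ_iff_deriv.mp (hf.of_le (by simp : ((⊤ : ℕ∞) : WithTop ℕ∞) + 1 ≤ ((⊤ : ℕ∞) : WithTop ℕ∞)))).2.2

private lemma hd {f : ℝ → ℝ} (hf : ContDiff ℝ (⊤ : ℕ∞) f) (t : ℝ) :
    HasDerivAt f (deriv f t) t := (hf.differentiable (by simp) t).hasDerivAt

theorem lenard_antidiagonal_step
    (u lm lm1 ln1' ln : ℝ → ℝ)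
    -- here ln1' plays the role of ℓ_{n-1}
    (hu : ContDiff ℝ (⊤ : ℕ∞) u) (hlm : ContDiff ℝ (⊤ : ℕ∞) lm) (hlm1 : ContDiff ℝ (⊤ : ℕ∞) lm1)
    (hln1' : ContDiff ℝ (⊤ : ℕ∞) ln1') (hln : ContDiff ℝ (⊤ : ℕ∞) ln)
    (hrecm : ∀ s, deriv lm1 s =
      deriv (deriv (deriv lm)) s + 4 * u s * deriv lm s + 2 * deriv u s * lm s)
    (hrecn : ∀ s, deriv ln s =
      deriv (deriv (deriv ln1')) s + 4 * u s * deriv ln1' s + 2 * deriv u s * ln1' s) :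
    ∀ s, lm s * deriv ln s =
      lm1 s * deriv ln1' s +
        deriv (fun t =>
          (deriv (deriv (fun r => ln1' r * lm r)) t
            - 3 * deriv ln1' t * deriv lm t + 4 * u t * ln1' t * lm t)
          - ln1' t * lm1 t) s := by
  intro s
  have ha1 := smooth_deriv' hln1'
  have ha2 := smooth_deriv' ha1
  have hb1 := smooth_deriv' hlm
  have hb2 := smooth_deriv' hb1
  have h1 : deriv (fun r => ln1' r * lm r)
      = fun t => deriv ln1' t * lm t + ln1' t * deriv lm t :=
    funext fun t => ((hd hln1' t).mul (hd hlm t)).deriv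
  have h2 : deriv (deriv (fun r => ln1' r * lm r))
      = fun t => deriv (deriv ln1') t * lm t + 2 * (deriv ln1' t * deriv lm t)
          + ln1' t * deriv (deriv lm) t := by
    rw [h1]; funext t
    have := (((hd ha1 t).mul (hd hlm t)).add ((hd hln1' t).mul (hd hb1 t))).deriv
    erw [this]; ring
  have h3 : (fun t =>
        (deriv (deriv (fun r => ln1' r * lm r)) t
          - 3 * deriv ln1' t * deriv lm t + 4 * u t * ln1' t * lm t)
        - ln1' t * lm1 t)
      = fun t =>
        ((deriv (deriv ln1') t * lm t + 2 * (deriv ln1' t * deriv lm t)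
            + ln1' t * deriv (deriv lm) t)
          - 3 * (deriv ln1' t * deriv lm t) + 4 * u t * ln1' t * lm t)
        - ln1' t * lm1 t := by
    funext t; rw [h2]; ring
  rw [h3]
  have H :=
    (((((hd ha2 s).mul (hd hlm s)).add
        (((hd ha1 s).mul (hd hb1 s)).const_mul 2)).add
        ((hd hln1' s).mul (hd hb2 s))).sub
      (((hd ha1 s).mul (hd hb1 s)).const_mul 3)).add
      ((((hd hu s).const_mul 4).mul (hd hln1' s)).mul (hd hlm s))
  have H2 := (H.sub ((hd hln1' s).mul (hd hlm1 s))).deriv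
  erw [H2]; rw [hrecm s, hrecn s]; simp only [Pi.mul_apply]
  ring
end

section
/- Let u : ℝ → ℝ be smooth and let ℓ_0, …, ℓ_{k+1} : ℝ → ℝ be smooth functions satisfying the Lenard recursion ℓ_{j+1}' = ℓ_j''' + 4u·ℓ_j' + 2u'·ℓ_j for 0 ≤ j ≤ k. Then for any m, n, r with the indices in range, ℓ_m·ℓ_n' = ℓ_{m+r}·ℓ_{n-r}' + (Σ_{q=0}^{r-1} [Ω_{n-q-1,m+q} - ℓ_{n-q-1}·ℓ_{m+q+1}])', where Ω_{a,b} = (ℓ_a·ℓ_b)'' - 3ℓ_a'·ℓ_b' + 4u·ℓ_a·ℓ_b. -/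
open scoped ContDiff

private lemma one_le_inf : (∞ : WithTop ℕ∞) ≠ 0 := by simp

private lemma cderiv {f : ℝ → ℝ} (hf : ContDiff ℝ ∞ f) : ContDiff ℝ ∞ (deriv f) :=
  (contDiff_infty_iff_deriv.mp hf).2

private lemma term_contDiff {u f g h : ℝ → ℝ} (hu : ContDiff ℝ ∞ u)
    (hf : ContDiff ℝ ∞ f) (hg : ContDiff ℝ ∞ g) (hh : ContDiff ℝ ∞ h) :
    ContDiff ℝ ∞ (fun t => (deriv (deriv (fun x => f x * g x)) t
        - 3 * deriv f t * deriv g t + 4 * u t * f t * g t) - f t * h t) := by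
  have h2 : ContDiff ℝ ∞ (deriv (deriv (fun x => f x * g x))) := cderiv (cderiv (hf.mul hg))
  exact ((h2.sub ((contDiff_const.mul (cderiv hf)).mul (cderiv hg))).add
    (((contDiff_const.mul hu).mul hf).mul hg)).sub (hf.mul hh)

private lemma lenard_step (k : ℕ) (u : ℝ → ℝ) (l : ℕ → ℝ → ℝ)
    (hu : ContDiff ℝ (⊤ : ℕ∞) u) (hl : ∀ j ≤ k + 1, ContDiff ℝ (⊤ : ℕ∞) (l j))
    (hrec : ∀ j ≤ k, ∀ s, deriv (l (j + 1)) s =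
      deriv (deriv (deriv (l j))) s + 4 * u s * deriv (l j) s + 2 * deriv u s * l j s)
    (a b : ℕ) (ha : a ≤ k) (hb : b ≤ k) (s : ℝ) :
    l b s * deriv (l (a + 1)) s = l (b + 1) s * deriv (l a) s +
      deriv (fun t => (deriv (deriv (fun x => l a x * l b x)) t
          - 3 * deriv (l a) t * deriv (l b) t
          + 4 * u t * l a t * l b t)
        - l a t * l (b + 1) t) s := by
  have hu' : ContDiff ℝ ∞ u := hu.of_le (by simp)
  have cf : ContDiff ℝ ∞ (l a) := (hl a (by omega)).of_le (by simp)
  have cg : ContDiff ℝ ∞ (l b) := (hl b (by omega)).of_le (by simp)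
  have ch : ContDiff ℝ ∞ (l (b + 1)) := (hl (b + 1) (by omega)).of_le (by simp)
  have cf' := cderiv cf
  have cf'' := cderiv cf'
  have cg' := cderiv cg
  have cg'' := cderiv cg'
  have h1 : deriv (fun x => l a x * l b x)
      = fun x => deriv (l a) x * l b x + l a x * deriv (l b) x :=
    funext fun x => deriv_fun_mul (cf.differentiable one_le_inf x) (cg.differentiable one_le_inf x)
  have h2 : deriv (deriv (fun x => l a x * l b x))
      = fun x => (deriv (deriv (l a)) x * l b x + deriv (l a) x * deriv (l b) x)
        + (deriv (l a) x * deriv (l b) x + l a x * deriv (deriv (l b)) x) := by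
    rw [h1]
    funext x
    exact (((cf'.differentiable one_le_inf x).hasDerivAt.mul
        (cg.differentiable one_le_inf x).hasDerivAt).add
      ((cf.differentiable one_le_inf x).hasDerivAt.mul
        (cg'.differentiable one_le_inf x).hasDerivAt)).deriv
  simp only [h2]
  have Hf : HasDerivAt (l a) (deriv (l a) s) s := (cf.differentiable one_le_inf s).hasDerivAt
  have Hf' : HasDerivAt (deriv (l a)) (deriv (deriv (l a)) s) s :=
    (cf'.differentiable one_le_inf s).hasDerivAt
  have Hf'' : HasDerivAt (deriv (deriv (l a))) (deriv (deriv (deriv (l a))) s) s :=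
    (cf''.differentiable one_le_inf s).hasDerivAt
  have Hg : HasDerivAt (l b) (deriv (l b) s) s := (cg.differentiable one_le_inf s).hasDerivAt
  have Hg' : HasDerivAt (deriv (l b)) (deriv (deriv (l b)) s) s :=
    (cg'.differentiable one_le_inf s).hasDerivAt
  have Hg'' : HasDerivAt (deriv (deriv (l b))) (deriv (deriv (deriv (l b))) s) s :=
    (cg''.differentiable one_le_inf s).hasDerivAt
  have Hu : HasDerivAt u (deriv u s) s := (hu'.differentiable one_le_inf s).hasDerivAt
  have Hh : HasDerivAt (l (b + 1)) (deriv (l (b + 1)) s) s :=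
    (ch.differentiable one_le_inf s).hasDerivAt
  have big := (((((Hf''.fun_mul Hg).fun_add (Hf'.fun_mul Hg')).fun_add
        ((Hf'.fun_mul Hg').fun_add (Hf.fun_mul Hg''))).fun_sub
      (((hasDerivAt_const s (3 : ℝ)).fun_mul Hf').fun_mul Hg')).fun_add
      ((((hasDerivAt_const s (4 : ℝ)).fun_mul Hu).fun_mul Hf).fun_mul Hg)).fun_sub (Hf.fun_mul Hh)
  rw [big.deriv, hrec a ha s, hrec b hb s]
  ring

theorem lenard_antidiagonal_general
    (k : ℕ) (u : ℝ → ℝ) (l : ℕ → ℝ → ℝ)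
    (hu : ContDiff ℝ (⊤ : ℕ∞) u) (hl : ∀ j ≤ k + 1, ContDiff ℝ (⊤ : ℕ∞) (l j))
    (hrec : ∀ j ≤ k, ∀ s, deriv (l (j + 1)) s =
      deriv (deriv (deriv (l j))) s + 4 * u s * deriv (l j) s + 2 * deriv u s * l j s)
    (m n r : ℕ) (hmr : m + r ≤ k + 1) (hrn : r ≤ n) (hn : n ≤ k + 1) :
    ∀ s, l m s * deriv (l n) s =
      l (m + r) s * deriv (l (n - r)) s +
        deriv (fun t => ∑ q ∈ Finset.range r,
          ((deriv (deriv (fun x => l (n - q - 1) x * l (m + q) x)) t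
              - 3 * deriv (l (n - q - 1)) t * deriv (l (m + q)) t
              + 4 * u t * l (n - q - 1) t * l (m + q) t)
            - l (n - q - 1) t * l (m + q + 1) t)) s := by
  revert hmr hrn
  induction r with
  | zero =>
    intro hmr hrn s
    simp
  | succ r ih =>
    intro hmr hrn s
    rw [ih (by omega) (by omega) s]
    -- differentiability of each term of the sum
    have hterm : ∀ q, q ≤ r → DifferentiableAt ℝ
        (fun t => (deriv (deriv (fun x => l (n - q - 1) x * l (m + q) x)) t
            - 3 * deriv (l (n - q - 1)) t * deriv (l (m + q)) t
            + 4 * u t * l (n - q - 1) t * l (m + q) t)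
          - l (n - q - 1) t * l (m + q + 1) t) s := by
      intro q hq
      exact ((term_contDiff (hu.of_le (by simp)) ((hl (n - q - 1) (by omega)).of_le (by simp))
        ((hl (m + q) (by omega)).of_le (by simp))
        ((hl (m + q + 1) (by omega)).of_le (by simp))).differentiable one_le_inf) s
    have hsplit : (fun t => ∑ q ∈ Finset.range (r + 1),
          ((deriv (deriv (fun x => l (n - q - 1) x * l (m + q) x)) t
              - 3 * deriv (l (n - q - 1)) t * deriv (l (m + q)) t
              + 4 * u t * l (n - q - 1) t * l (m + q) t)
            - l (n - q - 1) t * l (m + q + 1) t))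
        = fun t => (∑ q ∈ Finset.range r,
          ((deriv (deriv (fun x => l (n - q - 1) x * l (m + q) x)) t
              - 3 * deriv (l (n - q - 1)) t * deriv (l (m + q)) t
              + 4 * u t * l (n - q - 1) t * l (m + q) t)
            - l (n - q - 1) t * l (m + q + 1) t))
          + ((deriv (deriv (fun x => l (n - r - 1) x * l (m + r) x)) t
              - 3 * deriv (l (n - r - 1)) t * deriv (l (m + r)) t
              + 4 * u t * l (n - r - 1) t * l (m + r) t)
            - l (n - r - 1) t * l (m + r + 1) t) :=
      funext fun t => Finset.sum_range_succ _ _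
    have hdsum : DifferentiableAt ℝ (fun t => ∑ q ∈ Finset.range r,
          ((deriv (deriv (fun x => l (n - q - 1) x * l (m + q) x)) t
              - 3 * deriv (l (n - q - 1)) t * deriv (l (m + q)) t
              + 4 * u t * l (n - q - 1) t * l (m + q) t)
            - l (n - q - 1) t * l (m + q + 1) t)) s := by
      refine ((ContDiff.sum fun q hq => ?_).differentiable one_le_inf) s
      exact term_contDiff (hu.of_le (by simp)) ((hl (n - q - 1) (by omega)).of_le (by simp))
        ((hl (m + q) (by simp only [Finset.mem_range] at hq; omega)).of_le (by simp))
        ((hl (m + q + 1) (by simp only [Finset.mem_range] at hq; omega)).of_le (by simp))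
    rw [hsplit, deriv_fun_add hdsum (hterm r le_rfl)]
    have hstep := lenard_step k u l hu hl hrec (n - r - 1) (m + r) (by omega) (by omega) s
    have he : n - r - 1 + 1 = n - r := by omega
    rw [he] at hstep
    rw [show m + (r + 1) = m + r + 1 by omega, show n - (r + 1) = n - r - 1 by omega,
      hstep]
    ring
end

section
/- Let u : ℝ → ℝ be smooth and let ℓ_0, …, ℓ_{k+1} be smooth functions satisfying the Lenard recursion ℓ_{j+1}' = ℓ_j''' + 4u·ℓ_j' + 2u'·ℓ_j for 0 ≤ j ≤ k. If ℓ_{k+1}' = 0, then for each 0 ≤ p ≤ k the function τ_p := -ℓ_{k+1}·ℓ_{k-p} + Σ_{q=0}^{p} [ℓ_{k-q}·ℓ_{k-p+q+1} - Ω_{k-p+q,k-q}] has vanishing derivative (is constant), where Ω_{a,b} = (ℓ_a·ℓ_b)'' - 3ℓ_a'·ℓ_b' + 4u·ℓ_a·ℓ_b. -/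
private lemma omega_hasDerivAt (u f g : ℝ → ℝ) (hu : ContDiff ℝ (⊤ : ℕ∞) u)
    (hf : ContDiff ℝ (⊤ : ℕ∞) f) (hg : ContDiff ℝ (⊤ : ℕ∞) g) (s : ℝ) :
    HasDerivAt (fun t => deriv (deriv (fun x => f x * g x)) t
        - 3 * deriv f t * deriv g t + 4 * u t * f t * g t)
      ((deriv (deriv (deriv f)) s + 4 * u s * deriv f s + 2 * deriv u s * f s) * g s
        + f s * (deriv (deriv (deriv g)) s + 4 * u s * deriv g s + 2 * deriv u s * g s)) s := by
  have step : ∀ h : ℝ → ℝ, ContDiff ℝ (⊤ : ℕ∞) h → ContDiff ℝ (⊤ : ℕ∞) (deriv h) :=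
    fun h hh => ((contDiff_succ_iff_deriv (n := (⊤ : ℕ∞))).mp (by exact hh)).2.2
  have hf0 : Differentiable ℝ f := hf.differentiable (by simp)
  have hf1 : Differentiable ℝ (deriv f) := (step f hf).differentiable (by simp)
  have hf2 : Differentiable ℝ (deriv (deriv f)) :=
    (step _ (step f hf)).differentiable (by simp)
  have hg0 : Differentiable ℝ g := hg.differentiable (by simp)
  have hg1 : Differentiable ℝ (deriv g) := (step g hg).differentiable (by simp)
  have hg2 : Differentiable ℝ (deriv (deriv g)) :=
    (step _ (step g hg)).differentiable (by simp)
  have hu0 : Differentiable ℝ u := hu.differentiable (by simp)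
  have e1 : deriv (fun x => f x * g x) = fun x => deriv f x * g x + f x * deriv g x :=
    funext fun x => deriv_mul (hf0 x) (hg0 x)
  have e2 : deriv (deriv (fun x => f x * g x)) =
      fun x => (deriv (deriv f) x * g x + deriv f x * deriv g x)
        + (deriv f x * deriv g x + f x * deriv (deriv g) x) := by
    rw [e1]
    funext x
    rw [deriv_fun_add ((hf1 x).fun_mul (hg0 x)) ((hf0 x).fun_mul (hg1 x)),
      deriv_fun_mul (hf1 x) (hg0 x), deriv_fun_mul (hf0 x) (hg1 x)]
  have Hf0 : HasDerivAt f (deriv f s) s := (hf0 s).hasDerivAt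
  have Hf1 : HasDerivAt (deriv f) (deriv (deriv f) s) s := (hf1 s).hasDerivAt
  have Hf2 : HasDerivAt (deriv (deriv f)) (deriv (deriv (deriv f)) s) s := (hf2 s).hasDerivAt
  have Hg0 : HasDerivAt g (deriv g s) s := (hg0 s).hasDerivAt
  have Hg1 : HasDerivAt (deriv g) (deriv (deriv g) s) s := (hg1 s).hasDerivAt
  have Hg2 : HasDerivAt (deriv (deriv g)) (deriv (deriv (deriv g)) s) s := (hg2 s).hasDerivAt
  have Hu : HasDerivAt u (deriv u s) s := (hu0 s).hasDerivAt
  rw [e2]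
  have Htot := ((((Hf2.fun_mul Hg0).fun_add (Hf1.fun_mul Hg1)).fun_add
      ((Hf1.fun_mul Hg1).fun_add (Hf0.fun_mul Hg2))).fun_sub
      ((Hf1.const_mul (3:ℝ)).fun_mul Hg1)).fun_add (((Hu.const_mul (4:ℝ)).fun_mul Hf0).fun_mul Hg0)
  refine Htot.congr_deriv ?_
  ring

theorem lenard_constants_of_motion_tau
    (k : ℕ) (u : ℝ → ℝ) (l : ℕ → ℝ → ℝ)
    (hu : ContDiff ℝ (⊤ : ℕ∞) u) (hl : ∀ j ≤ k + 1, ContDiff ℝ (⊤ : ℕ∞) (l j))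
    (hrec : ∀ j ≤ k, ∀ s, deriv (l (j + 1)) s =
      deriv (deriv (deriv (l j))) s + 4 * u s * deriv (l j) s + 2 * deriv u s * l j s)
    (htop : ∀ s, deriv (l (k + 1)) s = 0)
    (p : ℕ) (hp : p ≤ k) :
    ∀ s, deriv (fun t =>
        -(l (k + 1) t * l (k - p) t) +
          ∑ q ∈ Finset.range (p + 1),
            (l (k - q) t * l (k - p + q + 1) t -
              (deriv (deriv (fun x => l (k - p + q) x * l (k - q) x)) t
                - 3 * deriv (l (k - p + q)) t * deriv (l (k - q)) t
                + 4 * u t * l (k - p + q) t * l (k - q) t))) s = 0 := by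
  intro s
  set A : ℕ → ℝ := fun q => deriv (l (k - q)) s * l (k - p + q + 1) s with hA
  set B : ℕ → ℝ := fun q => l (k - p + q) s * deriv (l (k - q + 1)) s with hB
  have hmem : ∀ q ∈ Finset.range (p + 1),
      HasDerivAt (fun t =>
        l (k - q) t * l (k - p + q + 1) t -
          (deriv (deriv (fun x => l (k - p + q) x * l (k - q) x)) t
            - 3 * deriv (l (k - p + q)) t * deriv (l (k - q)) t
            + 4 * u t * l (k - p + q) t * l (k - q) t)) (A q - B q) s := by
    intro q hq
    rw [Finset.mem_range, Nat.lt_succ_iff] at hq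
    have h1 : k - q ≤ k + 1 := by omega
    have h2 : k - p + q + 1 ≤ k + 1 := by omega
    have h3 : k - p + q ≤ k := by omega
    have h4 : k - q ≤ k := by omega
    have Hprod : HasDerivAt (fun t => l (k - q) t * l (k - p + q + 1) t)
        (deriv (l (k - q)) s * l (k - p + q + 1) s
          + l (k - q) s * deriv (l (k - p + q + 1)) s) s :=
      (((hl _ h1).differentiable (by simp) s).hasDerivAt).mul
        (((hl _ h2).differentiable (by simp) s).hasDerivAt)
    have HΩ := omega_hasDerivAt u (l (k - p + q)) (l (k - q)) hu
      (hl _ (h3.trans (Nat.le_succ k))) (hl _ (h4.trans (Nat.le_succ k))) s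
    rw [← hrec _ h3 s, ← hrec _ h4 s] at HΩ
    have Hcomb := Hprod.fun_sub HΩ
    refine Hcomb.congr_deriv ?_
    simp only [hA, hB]
    ring
  apply HasDerivAt.deriv
  have Hfirst : HasDerivAt (fun t => -(l (k + 1) t * l (k - p) t))
      (-(deriv (l (k + 1)) s * l (k - p) s + l (k + 1) s * deriv (l (k - p)) s)) s :=
    ((((hl _ le_rfl).differentiable (by simp) s).hasDerivAt).mul
      (((hl _ (by omega)).differentiable (by simp) s).hasDerivAt)).neg
  have Htot := Hfirst.fun_add (HasDerivAt.fun_sum hmem)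
  refine Htot.congr_deriv ?_
  have hsum : ∑ q ∈ Finset.range (p + 1), (A q - B q) = A p := by
    rw [Finset.sum_sub_distrib]
    have hB0 : B 0 = 0 := by
      simp only [hB, Nat.sub_zero, htop s, mul_zero]
    have hBsum : ∑ q ∈ Finset.range (p + 1), B q = ∑ q ∈ Finset.range p, A q := by
      rw [Finset.sum_range_succ', hB0, add_zero]
      refine Finset.sum_congr rfl fun q hq => ?_
      rw [Finset.mem_range] at hq
      simp only [hA, hB]
      have e1 : k - p + (q + 1) = k - p + q + 1 := by omega
      have e2 : k - (q + 1) + 1 = k - q := by omega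
      rw [e1, e2, mul_comm]
    rw [hBsum, Finset.sum_range_succ]
    ring
  rw [hsum]
  simp only [hA]
  have e3 : k - p + p + 1 = k + 1 := by omega
  rw [e3, htop s]
  ring
end

section
/- Let u : ℝ → ℝ be smooth and let ℓ_0, …, ℓ_{k+1} be smooth functions satisfying the Lenard recursion ℓ_{j+1}' = ℓ_j''' + 4u·ℓ_j' + 2u'·ℓ_j for 0 ≤ j ≤ k. If ℓ_0' = 0, then for each 0 ≤ p ≤ k the function σ_p := -ℓ_0·ℓ_p + Σ_{q=0}^{p-1} [Ω_{p-1-q,q} - ℓ_{p-1-q}·ℓ_{q+1}] has vanishing derivative (is constant), where Ω_{a,b} = (ℓ_a·ℓ_b)'' - 3ℓ_a'·ℓ_b' + 4u·ℓ_a·ℓ_b. -/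
open scoped ContDiff

private lemma lenard_d2mul (f g : ℝ → ℝ) (hf : ContDiff ℝ ∞ f) (hg : ContDiff ℝ ∞ g) (t : ℝ) :
    deriv (deriv (fun x => f x * g x)) t
      = deriv (deriv f) t * g t + 2 * (deriv f t * deriv g t) + f t * deriv (deriv g) t := by
  have hf' := (contDiff_infty_iff_deriv.mp hf).2
  have hg' := (contDiff_infty_iff_deriv.mp hg).2
  have h1 : deriv (fun x => f x * g x) = fun x => deriv f x * g x + f x * deriv g x :=
    funext fun x => deriv_mul (hf.differentiable (by norm_num) x) (hg.differentiable (by norm_num) x)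
  rw [h1]
  have Hf : HasDerivAt f (deriv f t) t := (hf.differentiable (by norm_num) t).hasDerivAt
  have Hg : HasDerivAt g (deriv g t) t := (hg.differentiable (by norm_num) t).hasDerivAt
  have Hf' : HasDerivAt (deriv f) (deriv (deriv f) t) t := (hf'.differentiable (by norm_num) t).hasDerivAt
  have Hg' : HasDerivAt (deriv g) (deriv (deriv g) t) t := (hg'.differentiable (by norm_num) t).hasDerivAt
  rw [((Hf'.fun_mul Hg).fun_add (Hf.fun_mul Hg')).deriv]
  ring

private lemma lenard_key (u f g h1 h2 : ℝ → ℝ)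
    (hu : ContDiff ℝ ∞ u) (hf : ContDiff ℝ ∞ f) (hg : ContDiff ℝ ∞ g)
    (hh2 : Differentiable ℝ h2)
    (h1rec : ∀ s, deriv h1 s =
      deriv (deriv (deriv f)) s + 4 * u s * deriv f s + 2 * deriv u s * f s)
    (h2rec : ∀ s, deriv h2 s =
      deriv (deriv (deriv g)) s + 4 * u s * deriv g s + 2 * deriv u s * g s)
    (s : ℝ) :
    HasDerivAt (fun t =>
        (deriv (deriv (fun x => f x * g x)) t - 3 * deriv f t * deriv g t
          + 4 * u t * f t * g t) - f t * h2 t)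
      (g s * deriv h1 s - deriv f s * h2 s) s := by
  have hf' := (contDiff_infty_iff_deriv.mp hf).2
  have hg' := (contDiff_infty_iff_deriv.mp hg).2
  have hf'' := (contDiff_infty_iff_deriv.mp hf').2
  have hg'' := (contDiff_infty_iff_deriv.mp hg').2
  have one_le : (∞ : WithTop ℕ∞) ≠ 0 := by norm_num
  have Hf : HasDerivAt f (deriv f s) s := (hf.differentiable one_le s).hasDerivAt
  have Hg : HasDerivAt g (deriv g s) s := (hg.differentiable one_le s).hasDerivAt
  have Hu : HasDerivAt u (deriv u s) s := (hu.differentiable one_le s).hasDerivAt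
  have Hf' : HasDerivAt (deriv f) (deriv (deriv f) s) s := (hf'.differentiable one_le s).hasDerivAt
  have Hg' : HasDerivAt (deriv g) (deriv (deriv g) s) s := (hg'.differentiable one_le s).hasDerivAt
  have Hf'' : HasDerivAt (deriv (deriv f)) (deriv (deriv (deriv f)) s) s :=
    (hf''.differentiable one_le s).hasDerivAt
  have Hg'' : HasDerivAt (deriv (deriv g)) (deriv (deriv (deriv g)) s) s :=
    (hg''.differentiable one_le s).hasDerivAt
  have Hh2 : HasDerivAt h2 (deriv h2 s) s := (hh2 s).hasDerivAt
  have hfe : (fun t =>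
        (deriv (deriv (fun x => f x * g x)) t - 3 * deriv f t * deriv g t
          + 4 * u t * f t * g t) - f t * h2 t)
      = (fun t =>
        ((deriv (deriv f) t * g t + 2 * (deriv f t * deriv g t) + f t * deriv (deriv g) t)
          - 3 * deriv f t * deriv g t + 4 * u t * f t * g t) - f t * h2 t) := by
    funext t
    rw [lenard_d2mul f g hf hg t]
  rw [hfe]
  have Hbig := ((((((Hf''.mul Hg).add ((Hf'.mul Hg').const_mul 2)).add
      (Hf.mul Hg'')).sub ((Hf'.const_mul 3).mul Hg')).add
      (((Hu.const_mul 4).mul Hf).mul Hg)).sub (Hf.mul Hh2))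
  refine Hbig.congr_deriv ?_
  rw [h1rec, h2rec]
  simp only [Pi.mul_apply]
  ring

theorem lenard_constants_of_motion_sigma
    (k : ℕ) (u : ℝ → ℝ) (l : ℕ → ℝ → ℝ)
    (hu : ContDiff ℝ (⊤ : ℕ∞) u) (hl : ∀ j ≤ k + 1, ContDiff ℝ (⊤ : ℕ∞) (l j))
    (hrec : ∀ j ≤ k, ∀ s, deriv (l (j + 1)) s =
      deriv (deriv (deriv (l j))) s + 4 * u s * deriv (l j) s + 2 * deriv u s * l j s)
    (hbot : ∀ s, deriv (l 0) s = 0)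
    (p : ℕ) (hp : p ≤ k) :
    ∀ s, deriv (fun t =>
        -(l 0 t * l p t) +
          ∑ q ∈ Finset.range p,
            ((deriv (deriv (fun x => l (p - 1 - q) x * l q x)) t
                - 3 * deriv (l (p - 1 - q)) t * deriv (l q) t
                + 4 * u t * l (p - 1 - q) t * l q t)
              - l (p - 1 - q) t * l (q + 1) t)) s = 0 := by
  intro s
  have one_le : (∞ : WithTop ℕ∞) ≠ 0 := by norm_num
  have hu' : ContDiff ℝ ∞ u := hu.of_le (by simp)
  have hl' : ∀ j ≤ k + 1, ContDiff ℝ ∞ (l j) := fun j hj => (hl j hj).of_le (by simp)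
  -- derivative of each summand
  have hsummand : ∀ q ∈ Finset.range p, HasDerivAt (fun t =>
        (deriv (deriv (fun x => l (p - 1 - q) x * l q x)) t
            - 3 * deriv (l (p - 1 - q)) t * deriv (l q) t
            + 4 * u t * l (p - 1 - q) t * l q t)
          - l (p - 1 - q) t * l (q + 1) t)
      (l q s * deriv (l (p - q)) s - deriv (l (p - 1 - q)) s * l (q + 1) s) s := by
    intro q hq
    rw [Finset.mem_range] at hq
    have e1 : p - 1 - q + 1 = p - q := by omega
    refine lenard_key u (l (p - 1 - q)) (l q) (l (p - q)) (l (q + 1))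
      hu' (hl' _ (by omega)) (hl' _ (by omega))
      ((hl' _ (by omega)).differentiable one_le) ?_ ?_ s
    · rw [← e1]; exact hrec (p - 1 - q) (by omega)
    · exact hrec q (by omega)
  have H0 : HasDerivAt (fun t => -(l 0 t * l p t))
      (-(deriv (l 0) s * l p s + l 0 s * deriv (l p) s)) s :=
    (((hl' 0 (by omega)).differentiable one_le s).hasDerivAt.mul
      ((hl' p (by omega)).differentiable one_le s).hasDerivAt).neg
  have Hsum := HasDerivAt.fun_sum hsummand
  have Htot := H0.fun_add Hsum
  rw [Htot.deriv]
  -- telescoping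
  set G : ℕ → ℝ := fun m => l (p - m) s * deriv (l m) s with hG
  have hsum2 : ∑ q ∈ Finset.range p,
      (l q s * deriv (l (p - q)) s - deriv (l (p - 1 - q)) s * l (q + 1) s)
      = ∑ q ∈ Finset.range p, (G (p - 1 - q + 1) - G (p - 1 - q)) := by
    refine Finset.sum_congr rfl fun q hq => ?_
    rw [Finset.mem_range] at hq
    have e1 : p - 1 - q + 1 = p - q := by omega
    have e2 : p - (p - q) = q := by omega
    have e3 : p - (p - 1 - q) = q + 1 := by omega
    rw [e1, hG]
    simp only [e2, e3]
    ring
  rw [hsum2, Finset.sum_range_reflect (fun j => G (j + 1) - G j) p,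
    Finset.sum_range_sub G p]
  have hG0 : G 0 = l p s * deriv (l 0) s := by simp [hG]
  have hGp : G p = l 0 s * deriv (l p) s := by simp [hG]
  rw [hG0, hGp, hbot]
  ring
end

section
/- Suppose a, b, c, u : smooth functions with a(z,s) = -(1/2)∂_s b(z,s) and c(z,s) = (z-u(s))b(z,s) - (1/2)∂_s² b(z,s), and suppose ∂_s c(z,s) = 1 + 2(z-u(s))a(z,s). Then b satisfies z·∂_s b = (1/4)(∂_s³ b + 4u·∂_s b + 2u'·b) + 1/2. -/
theorem b_equation_from_lax_relations
    (u : ℝ → ℝ) (a b c : ℝ → ℝ → ℝ)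
    (hu : ContDiff ℝ (⊤ : ℕ∞) u) (hb : ∀ z, ContDiff ℝ (⊤ : ℕ∞) (b z))
    (ha : ∀ z s, a z s = -(1 / 2) * deriv (b z) s)
    (hc : ∀ z s, c z s = (z - u s) * b z s - (1 / 2) * deriv (deriv (b z)) s)
    (hac : ∀ z s, deriv (c z) s = 1 + 2 * (z - u s) * a z s) :
    ∀ z s, z * deriv (b z) s =
      (1 / 4) * (deriv (deriv (deriv (b z))) s + 4 * u s * deriv (b z) s
        + 2 * deriv u s * b z s) + 1 / 2 := by
  intro z s
  have hbz := hb z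
  have hb0 : Differentiable ℝ (b z) := hbz.differentiable (by simp)
  have hbz1 := (contDiff_infty_iff_deriv.mp (hbz.of_le (by simp))).2
  have hb1 : Differentiable ℝ (deriv (b z)) := hbz1.differentiable (by simp)
  have hbz2 := (contDiff_infty_iff_deriv.mp hbz1).2
  have hb2 : Differentiable ℝ (deriv (deriv (b z))) := hbz2.differentiable (by simp)
  have hu0 : Differentiable ℝ u := hu.differentiable (by simp)
  have hcz : c z = fun t => (z - u t) * b z t - (1 / 2) * deriv (deriv (b z)) t :=
    funext (hc z)
  have hd : deriv (c z) s =
      (-deriv u s) * b z s + (z - u s) * deriv (b z) s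
        - (1 / 2) * deriv (deriv (deriv (b z))) s := by
    rw [hcz]
    rw [deriv_fun_sub (f := fun t => (z - u t) * b z t) (g := fun t => (1 / 2) * deriv (deriv (b z)) t) (((differentiable_const z).sub hu0).mul hb0).differentiableAt
      ((differentiable_const (1/2:ℝ)).mul hb2).differentiableAt]
    rw [deriv_fun_mul (c := fun t => z - u t) (d := b z) ((differentiable_const z).sub hu0).differentiableAt hb0.differentiableAt]
    rw [deriv_const_mul _ hb2.differentiableAt]
    rw [deriv_fun_sub (f := fun _ => z) (g := u) (differentiableAt_const z) hu0.differentiableAt, deriv_const]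
    ring
  have h2 := hac z s
  rw [hd, ha z s] at h2
  linarith
end

section
/- Let ℓ_1 : ℝ → ℝ be smooth and nonvanishing on s > 0, let τ_0, τ_1 be real constants, set k = 1, ℓ_0(s) = s/2, ℓ_2 = 0, and define u(s) = -(1/(4ℓ_1(s)²))·((ℓ_1²)''(s) - 3(ℓ_1'(s))² + τ_0). Then the p = 1 equation of the system Σ_{q=0}^{p}(ℓ_{k-p+q+1}ℓ_{k-q} - (ℓ_{k-p+q}ℓ_{k-q})'' + 3ℓ_{k-p+q}'ℓ_{k-q}' - 4u·ℓ_{k-p+q}ℓ_{k-q}) = τ_p is equivalent, for s > 0, to the Painlevé III-type ODE ℓ_1'' = (ℓ_1')²/ℓ_1 - ℓ_1'/s - ℓ_1²/s - τ_0/ℓ_1 + τ_1/s. -/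
-- second derivative of x/2 * l1 x
lemma deriv2_half_mul (l1 : ℝ → ℝ) (hd1 : Differentiable ℝ l1)
    (hd2 : Differentiable ℝ (deriv l1)) (s : ℝ) :
    deriv (deriv (fun x => x / 2 * l1 x)) s = deriv l1 s + s / 2 * deriv (deriv l1) s := by
  have h1 : deriv (fun x => x / 2 * l1 x) = fun x => 1 / 2 * l1 x + x / 2 * deriv l1 x := by
    funext x
    exact (((hasDerivAt_id x).div_const 2).mul (hd1 x).hasDerivAt).deriv
  rw [h1]
  have h2 : HasDerivAt (fun x => 1 / 2 * l1 x + x / 2 * deriv l1 x)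
      (1 / 2 * deriv l1 s + (1 / 2 * deriv l1 s + s / 2 * deriv (deriv l1) s)) s := by
    exact ((hd1 s).hasDerivAt.const_mul (1/2)).add
      (((hasDerivAt_id s).div_const 2).mul (hd2 s).hasDerivAt)
  rw [h2.deriv]; ring

lemma deriv2_sq (l1 : ℝ → ℝ) (hd1 : Differentiable ℝ l1)
    (hd2 : Differentiable ℝ (deriv l1)) (s : ℝ) :
    deriv (deriv (fun x => l1 x ^ 2)) s =
      2 * deriv l1 s ^ 2 + 2 * l1 s * deriv (deriv l1) s := by
  have h1 : deriv (fun x => l1 x ^ 2) = fun x => 2 * l1 x * deriv l1 x := by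
    funext x
    have := ((hd1 x).hasDerivAt.pow 2).deriv
    simp only [Nat.cast_ofNat, pow_one] at this; rw [show (fun x => l1 x ^ 2) = l1 ^ 2 from rfl, this]; ring
  rw [h1]
  have h2 : HasDerivAt (fun x => 2 * l1 x * deriv l1 x)
      (2 * deriv l1 s * deriv l1 s + 2 * l1 s * deriv (deriv l1) s) s :=
    (((hd1 s).hasDerivAt.const_mul 2).mul (hd2 s).hasDerivAt)
  rw [h2.deriv]; ring

theorem painleveIII_k1_equation
    (l1 : ℝ → ℝ) (hl1 : ContDiff ℝ (⊤ : ℕ∞) l1) (hne : ∀ s > 0, l1 s ≠ 0)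
    (τ0 τ1 : ℝ)
    (l0 l2 u : ℝ → ℝ)
    (hl0 : ∀ s, l0 s = s / 2) (hl2 : ∀ s, l2 s = 0)
    (hu : ∀ s, u s = -(1 / (4 * l1 s ^ 2)) *
      (deriv (deriv (fun x => l1 x ^ 2)) s - 3 * (deriv l1 s) ^ 2 + τ0)) :
    ∀ s > 0,
      ((∑ q ∈ Finset.range 2,
        (([l0, l1, l2][q + 1]!) s * ([l0, l1, l2][1 - q]!) s
          - deriv (deriv (fun x => ([l0, l1, l2][q]!) x * ([l0, l1, l2][1 - q]!) x)) s
          + 3 * deriv ([l0, l1, l2][q]!) s * deriv ([l0, l1, l2][1 - q]!) s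
          - 4 * u s * ([l0, l1, l2][q]!) s * ([l0, l1, l2][1 - q]!) s)) = τ1)
      ↔ deriv (deriv l1) s =
          (deriv l1 s) ^ 2 / l1 s - deriv l1 s / s - l1 s ^ 2 / s - τ0 / l1 s + τ1 / s := by
  intro s hs
  have hd1 : Differentiable ℝ l1 := hl1.differentiable (by simp)
  have hd2 : Differentiable ℝ (deriv l1) :=
    ((contDiff_infty_iff_deriv.mp (hl1.of_le (by simp))).2).differentiable (by simp)
  have hl0f : l0 = fun x => x / 2 := funext hl0
  have hl2f : l2 = fun _ => 0 := funext hl2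
  subst hl0f hl2f
  have hsne : s ≠ 0 := ne_of_gt hs
  have hane : l1 s ≠ 0 := hne s hs
  -- derivative facts
  have dl0 : deriv (fun x : ℝ => x / 2) s = 1 / 2 := by
    simpa using ((hasDerivAt_id s).div_const 2).deriv
  have key : deriv (deriv (fun x => x / 2 * l1 x)) s
      = deriv l1 s + s / 2 * deriv (deriv l1) s := deriv2_half_mul l1 hd1 hd2 s
  have comm : (fun x => l1 x * (x / 2)) = fun x => x / 2 * l1 x := by
    funext x; ring
  have husv : u s = -(1 / (4 * l1 s ^ 2)) *
      (2 * deriv l1 s ^ 2 + 2 * l1 s * deriv (deriv l1) s - 3 * (deriv l1 s) ^ 2 + τ0) := by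
    rw [hu s, deriv2_sq l1 hd1 hd2 s]
  simp only [Finset.sum_range_succ, Finset.sum_range_zero, List.getElem!_cons_zero, List.getElem!_cons_succ, Nat.sub_self]
  rw [comm, key, husv, dl0]
  set a := l1 s
  set b := deriv l1 s
  set c := deriv (deriv l1) s
  constructor
  · intro h
    field_simp at h ⊢
    linear_combination (1 / 2) * h
  · intro h
    rw [h]
    field_simp
    ring
end
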